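/- arXiv:2110.10351 — 3 statements merged into one kernel-verified Lean document; each statement's English description precedes it below -/
import Mathlib

section
/- Let A be a finite set and τ > 0. For Q, Q' : A → ℝ, define the softmax policies π(a) = exp(Q(a)/τ) / Σ_{a'} exp(Q(a')/τ) and π'(a) = exp(Q'(a)/τ) / Σ_{a'} exp(Q'(a')/τ). Then for every a ∈ A, |π(a) - π'(a)| ≤ (2/τ) ‖Q - Q'‖_∞. -/
/-- For `u ≤ 0` and `v ≤ 0`, `exp` is 1-Lipschitz. -/
lemma exp_lipschitz_nonpos {u v : ℝ} (hu : u ≤ 0) (hv : v ≤ 0) :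
    |Real.exp u - Real.exp v| ≤ |u - v| := by
  wlog h : v ≤ u generalizing u v
  · rw [abs_sub_comm, abs_sub_comm u v]; exact this hv hu (le_of_not_ge h)
  rw [abs_of_nonneg (by simpa using Real.exp_le_exp.2 h),
      abs_of_nonneg (by linarith)]
  have h1 : Real.exp u * ((v - u) + 1) ≤ Real.exp u * Real.exp (v - u) :=
    mul_le_mul_of_nonneg_left (Real.add_one_le_exp _) (Real.exp_pos u).le
  rw [← Real.exp_add, add_sub_cancel] at h1
  have h2 : Real.exp u ≤ 1 := Real.exp_le_one_iff.2 hu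
  nlinarith [Real.exp_pos v, Real.exp_pos u]

theorem stmt_10 {A : Type*} [Fintype A] [Nonempty A] (τ : ℝ) (hτ : 0 < τ)
    (Q Q' : A → ℝ) (π π' : A → ℝ)
    (hπ : ∀ a, π a = Real.exp (Q a / τ) / ∑ a', Real.exp (Q a' / τ))
    (hπ' : ∀ a, π' a = Real.exp (Q' a / τ) / ∑ a', Real.exp (Q' a' / τ)) :
    ∀ a, |π a - π' a| ≤ (2 / τ) *
      Finset.univ.sup' Finset.univ_nonempty (fun a' => |Q a' - Q' a'|) := by
  intro a
  set M : ℝ := Finset.univ.sup' Finset.univ_nonempty (fun a' => |Q a' - Q' a'|) with hM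
  have hMa : ∀ a', |Q a' - Q' a'| ≤ M := fun a' =>
    Finset.le_sup' (fun a' => |Q a' - Q' a'|) (Finset.mem_univ a')
  have hM0 : 0 ≤ M := (abs_nonneg _).trans (hMa a)
  set S : ℝ := ∑ a', Real.exp (Q a' / τ) with hS
  set S' : ℝ := ∑ a', Real.exp (Q' a' / τ) with hS'
  have hSpos : 0 < S := Finset.sum_pos (fun i _ => Real.exp_pos _) Finset.univ_nonempty
  have hS'pos : 0 < S' := Finset.sum_pos (fun i _ => Real.exp_pos _) Finset.univ_nonempty
  -- log-sum-exp Lipschitz bound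
  have key : ∀ (f g : A → ℝ), (∀ a', |f a' - g a'| ≤ M) →
      Real.log (∑ a', Real.exp (f a' / τ)) ≤ Real.log (∑ a', Real.exp (g a' / τ)) + M / τ := by
    intro f g hfg
    have hsum : (∑ a', Real.exp (f a' / τ)) ≤ (∑ a', Real.exp (g a' / τ)) * Real.exp (M / τ) := by
      rw [Finset.sum_mul]
      refine Finset.sum_le_sum fun i _ => ?_
      rw [← Real.exp_add]
      apply Real.exp_le_exp.2
      have := (abs_le.1 (hfg i)).2
      rw [← add_div, div_le_div_iff₀ hτ hτ]
      nlinarith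
    calc Real.log (∑ a', Real.exp (f a' / τ))
        ≤ Real.log ((∑ a', Real.exp (g a' / τ)) * Real.exp (M / τ)) :=
          Real.log_le_log (Finset.sum_pos (fun i _ => Real.exp_pos _) Finset.univ_nonempty) hsum
      _ = Real.log (∑ a', Real.exp (g a' / τ)) + M / τ := by
          rw [Real.log_mul (Finset.sum_pos (fun i _ => Real.exp_pos _) Finset.univ_nonempty).ne'
            (Real.exp_pos _).ne', Real.log_exp]
  have hlog : |Real.log S - Real.log S'| ≤ M / τ := by
    have h1 := key Q Q' hMa
    have h2 := key Q' Q (fun a' => by rw [abs_sub_comm]; exact hMa a')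
    rw [abs_le]; constructor <;> linarith
  -- rewrite π as exp
  have hu : π a = Real.exp (Q a / τ - Real.log S) := by
    rw [hπ, Real.exp_sub, Real.exp_log hSpos]
  have hu' : π' a = Real.exp (Q' a / τ - Real.log S') := by
    rw [hπ', Real.exp_sub, Real.exp_log hS'pos]
  have hle : Q a / τ - Real.log S ≤ 0 := by
    have : Real.exp (Q a / τ) ≤ S :=
      Finset.single_le_sum (f := fun a' => Real.exp (Q a' / τ))
        (fun i _ => (Real.exp_pos _).le) (Finset.mem_univ a)
    have := Real.log_le_log (Real.exp_pos _) this
    rw [Real.log_exp] at this; linarith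
  have hle' : Q' a / τ - Real.log S' ≤ 0 := by
    have : Real.exp (Q' a / τ) ≤ S' :=
      Finset.single_le_sum (f := fun a' => Real.exp (Q' a' / τ))
        (fun i _ => (Real.exp_pos _).le) (Finset.mem_univ a)
    have := Real.log_le_log (Real.exp_pos _) this
    rw [Real.log_exp] at this; linarith
  rw [hu, hu']
  calc |Real.exp (Q a / τ - Real.log S) - Real.exp (Q' a / τ - Real.log S')|
      ≤ |(Q a / τ - Real.log S) - (Q' a / τ - Real.log S')| := exp_lipschitz_nonpos hle hle'
    _ ≤ |Q a / τ - Q' a / τ| + |Real.log S - Real.log S'| := by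
        rw [show (Q a / τ - Real.log S) - (Q' a / τ - Real.log S')
          = (Q a / τ - Q' a / τ) - (Real.log S - Real.log S') by ring]
        exact abs_sub _ _
    _ ≤ M / τ + M / τ := by
        refine add_le_add ?_ hlog
        rw [div_sub_div_same, abs_div, abs_of_pos hτ, div_le_div_iff₀ hτ hτ]
        nlinarith [hMa a]
    _ = (2 / τ) * M := by ring
end

section
/- Let f₀, f₁, ..., f_m : X → ℝ, let π* be a maximizer of f₀ subject to fᵢ(x) ≥ cᵢ for all i, and let λ* ∈ ℝ₊^m be an optimal dual variable with strong duality: f₀(π*) = L(π*, λ*) = max_x L(x, λ*), where L(x, λ) = f₀(x) + Σᵢ λᵢ(fᵢ(x) - cᵢ). Suppose a point x̃ ∈ X and σ ≥ 0 satisfy f₀(π*) - f₀(x̃) + ⟨λ, (c - f(x̃))₊⟩ ≤ σ for some λ ∈ ℝ₊^m with λ ⪰ λ* + B·𝟏 (entrywise), where B > 0. Then ‖(c - f(x̃))₊‖₁ ≤ σ/B. -/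
/-! With `c - f(x̃)` written as `v`, the Lagrangian bound `L(x̃, λ*) ≤ L(π*, λ*) = f₀(π*)` gives
`f₀(x̃) ≤ f₀(π*) + ⟨λ*, v₊⟩`, so the gap hypothesis yields `⟨λ - λ*, v₊⟩ ≤ σ`. Every entry of
`λ - λ*` is at least `B` and `v₊ ⪰ 0`, hence `B ‖v₊‖₁ ≤ σ`. -/

open Finset

namespace Finset

variable {ι : Type*} (s : Finset ι) {w v : ι → ℝ}

theorem sum_mul_le_sum_mul_max_zero (hw : ∀ i ∈ s, 0 ≤ w i) :
    ∑ i ∈ s, w i * v i ≤ ∑ i ∈ s, w i * max (v i) 0 :=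
  sum_le_sum fun i hi => mul_le_mul_of_nonneg_left (le_max_left _ _) (hw i hi)

theorem mul_sum_max_zero_le {B : ℝ} (hw : ∀ i ∈ s, B ≤ w i) :
    B * ∑ i ∈ s, max (v i) 0 ≤ ∑ i ∈ s, w i * max (v i) 0 := by
  rw [mul_sum]
  exact sum_le_sum fun i hi => mul_le_mul_of_nonneg_right (hw i hi) (le_max_right _ _)

end Finset

theorem stmt_12_general {X : Type*} {m : ℕ}
    (f0 : X → ℝ) (f : X → Fin m → ℝ) (c : Fin m → ℝ)
    (pistar xtilde : X) (lamstar lam : Fin m → ℝ) (σ B : ℝ)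
    (hlamstar_nn : ∀ i, 0 ≤ lamstar i)
    -- strong duality: f₀(π*) = L(π*, λ*) = max_x L(x, λ*)
    (hsd : f0 pistar = f0 pistar + ∑ i, lamstar i * (f pistar i - c i))
    (hLmax : ∀ x : X,
      f0 x + ∑ i, lamstar i * (f x i - c i) ≤ f0 pistar + ∑ i, lamstar i * (f pistar i - c i))
    (hB : 0 < B)
    (hlam_ge : ∀ i, lamstar i + B ≤ lam i)
    (hgap : f0 pistar - f0 xtilde + ∑ i, lam i * max (c i - f xtilde i) 0 ≤ σ) :
    ∑ i, max (c i - f xtilde i) 0 ≤ σ / B := by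
  set v := fun i => c i - f xtilde i
  have hperturb : f0 xtilde ≤ f0 pistar + ∑ i, lamstar i * max (v i) 0 := by
    have hL := hLmax xtilde
    have hflip : ∑ i, lamstar i * (f xtilde i - c i) = -∑ i, lamstar i * v i := by
      rw [← sum_neg_distrib]; exact sum_congr rfl fun i _ => by ring
    linarith [sum_mul_le_sum_mul_max_zero univ (v := v) fun i _ => hlamstar_nn i]
  have hdual : ∑ i, (lam i - lamstar i) * max (v i) 0 ≤ σ := by
    simp only [sub_mul, sum_sub_distrib]
    linarith
  have hscaled : B * ∑ i, max (v i) 0 ≤ σ :=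
    (mul_sum_max_zero_le univ fun i _ => by linarith [hlam_ge i]).trans hdual
  rw [le_div_iff₀ hB]
  linarith

theorem stmt_12 {X : Type*} {m : ℕ}
    (f0 : X → ℝ) (f : X → Fin m → ℝ) (c : Fin m → ℝ)
    (pistar xtilde : X) (lamstar lam : Fin m → ℝ) (σ B : ℝ)
    (hfeas : ∀ i, c i ≤ f pistar i)
    (hmax : ∀ x : X, (∀ i, c i ≤ f x i) → f0 x ≤ f0 pistar)
    (hlamstar_nn : ∀ i, 0 ≤ lamstar i)
    -- strong duality: f₀(π*) = L(π*, λ*) = max_x L(x, λ*)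
    (hsd : f0 pistar = f0 pistar + ∑ i, lamstar i * (f pistar i - c i))
    (hLmax : ∀ x : X,
      f0 x + ∑ i, lamstar i * (f x i - c i) ≤ f0 pistar + ∑ i, lamstar i * (f pistar i - c i))
    (hσ : 0 ≤ σ) (hB : 0 < B)
    (hlam_ge : ∀ i, lamstar i + B ≤ lam i)
    (hgap : f0 pistar - f0 xtilde + ∑ i, lam i * max (c i - f xtilde i) 0 ≤ σ) :
    ∑ i, max (c i - f xtilde i) 0 ≤ σ / B :=
  stmt_12_general f0 f c pistar xtilde lamstar lam σ B hlamstar_nn hsd hLmax hB hlam_ge hgap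
end

section
/- Let d : ℝ₊^m → ℝ be convex and L-smooth, let μ > 0, and consider one iteration with stepsize parameters α ∈ (0,1), q ∈ [0,α], satisfying L(α - q)/(1 - q) ≤ μ and Lq(1-α)/(1-q) ≤ 1/(2η). Suppose λ̲ = (1-q)λ̄_{prev} + q λ_{prev}, λ̄ = (1-α)λ̄_{prev} + α λ_new, and g = λ̄ - λ̲ = α[λ_new - ((α-q)/(α(1-q)))λ̲ - (q(1-α)/(α(1-q)))λ_{prev}]. Then the smoothness upper bound d(λ̄) ≤ d(λ̲) + ⟨∇d(λ̲), λ̄ - λ̲⟩ + (L/2)‖g‖₂² combined with convexity yields: d(λ̄) ≤ (1-α)d(λ̄_{prev}) + α[d(λ̲) + ⟨∇d(λ̲), λ_new - λ̲⟩ + (μ/2)‖λ_new - λ̲‖₂² + (1/(4η))‖λ_new - λ_{prev}‖₂²]. -/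
theorem stmt_13 {m : ℕ}
    (d : (Fin m → ℝ) → ℝ) (gd : (Fin m → ℝ) → (Fin m → ℝ))
    (L μ α q η : ℝ) (hL : 0 ≤ L) (hμ : 0 < μ) (hη : 0 < η)
    (hα0 : 0 < α) (hα1 : α < 1) (hq0 : 0 ≤ q) (hqα : q ≤ α)
    (hc1 : L * (α - q) / (1 - q) ≤ μ)
    (hc2 : L * q * (1 - α) / (1 - q) ≤ 1 / (2 * η))
    -- convexity: d(y) ≥ d(x) + ⟨∇d(x), y - x⟩
    (hconv : ∀ x y : Fin m → ℝ, d x + ∑ i, gd x i * (y i - x i) ≤ d y)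
    -- L-smoothness upper bound
    (hsmooth : ∀ x y : Fin m → ℝ,
      d y ≤ d x + (∑ i, gd x i * (y i - x i)) + L / 2 * ∑ i, (y i - x i) ^ 2)
    (lam_bar_prev lam_prev lam_new lam_u lam_bar : Fin m → ℝ)
    (hlam_u : ∀ i, lam_u i = (1 - q) * lam_bar_prev i + q * lam_prev i)
    (hlam_bar : ∀ i, lam_bar i = (1 - α) * lam_bar_prev i + α * lam_new i) :
    d lam_bar ≤ (1 - α) * d lam_bar_prev
      + α * (d lam_u + (∑ i, gd lam_u i * (lam_new i - lam_u i))
          + μ / 2 * ∑ i, (lam_new i - lam_u i) ^ 2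
          + 1 / (4 * η) * ∑ i, (lam_new i - lam_prev i) ^ 2) := by
  have hq1 : q < 1 := lt_of_le_of_lt hqα hα1
  have h1q : (0:ℝ) < 1 - q := by linarith
  have hαq : α * (1 - q) ≠ 0 := by positivity
  set c1 : ℝ := (α - q) / (α * (1 - q)) with hc1def
  set c2 : ℝ := q * (1 - α) / (α * (1 - q)) with hc2def
  have hc1n : 0 ≤ c1 := by
    apply div_nonneg <;> nlinarith
  have hc2n : 0 ≤ c2 := by
    apply div_nonneg <;> nlinarith
  have hsum1 : c1 + c2 = 1 := by
    rw [hc1def, hc2def, ← add_div, div_eq_one_iff_eq hαq]; ring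
  set A := ∑ i, (lam_new i - lam_u i) ^ 2 with hA
  set B := ∑ i, (lam_new i - lam_prev i) ^ 2 with hB
  have hAn : 0 ≤ A := Finset.sum_nonneg fun i _ => sq_nonneg _
  have hBn : 0 ≤ B := Finset.sum_nonneg fun i _ => sq_nonneg _
  -- pointwise equality  lam_bar i - lam_u i = α * (c1 * u + c2 * v)
  have hptw : ∀ i, lam_bar i - lam_u i
      = α * (c1 * (lam_new i - lam_u i) + c2 * (lam_new i - lam_prev i)) := by
    intro i
    rw [hlam_bar i, hlam_u i, hc1def, hc2def]
    field_simp
    ring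
  -- quadratic bound via convexity of squares (Jensen)
  have hquad : ∑ i, (lam_bar i - lam_u i) ^ 2 ≤ α ^ 2 * (c1 * A + c2 * B) := by
    have heq : α ^ 2 * (c1 * A + c2 * B)
        = ∑ i, α ^ 2 * (c1 * (lam_new i - lam_u i) ^ 2
            + c2 * (lam_new i - lam_prev i) ^ 2) := by
      rw [hA, hB, Finset.mul_sum, Finset.mul_sum, mul_add, Finset.mul_sum, Finset.mul_sum,
        ← Finset.sum_add_distrib]
      exact Finset.sum_congr rfl fun i _ => by ring
    rw [heq]
    apply Finset.sum_le_sum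
    intro i _
    rw [hptw i]
    set u := lam_new i - lam_u i
    set v := lam_new i - lam_prev i
    nlinarith [mul_nonneg (mul_nonneg hc1n hc2n) (sq_nonneg (u - v)), sq_nonneg α,
      mul_nonneg (mul_nonneg (mul_nonneg hc1n hc2n) (sq_nonneg (u - v))) (sq_nonneg α)]
  -- split the inner product
  set S1 := ∑ i, gd lam_u i * (lam_bar_prev i - lam_u i) with hS1
  set S2 := ∑ i, gd lam_u i * (lam_new i - lam_u i) with hS2
  have hsplit : ∑ i, gd lam_u i * (lam_bar i - lam_u i) = (1 - α) * S1 + α * S2 := by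
    rw [hS1, hS2, Finset.mul_sum, Finset.mul_sum, ← Finset.sum_add_distrib]
    apply Finset.sum_congr rfl
    intro i _
    rw [hlam_bar i]
    ring
  have hsm := hsmooth lam_u lam_bar
  rw [hsplit] at hsm
  have hcv := hconv lam_u lam_bar_prev
  rw [← hS1] at hcv
  -- coefficient bounds
  have hb1 : L / 2 * (α ^ 2 * c1) ≤ α * (μ / 2) := by
    have he : L / 2 * (α ^ 2 * c1) = α / 2 * (L * (α - q) / (1 - q)) := by
      rw [hc1def]; field_simp
    rw [he]
    have := mul_le_mul_of_nonneg_left hc1 (by positivity : (0:ℝ) ≤ α / 2)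
    linarith
  have hb2 : L / 2 * (α ^ 2 * c2) ≤ α * (1 / (4 * η)) := by
    have he : L / 2 * (α ^ 2 * c2) = α / 2 * (L * q * (1 - α) / (1 - q)) := by
      rw [hc2def]; field_simp
    rw [he]
    have := mul_le_mul_of_nonneg_left hc2 (by positivity : (0:ℝ) ≤ α / 2)
    have he2 : α / 2 * (1 / (2 * η)) = α * (1 / (4 * η)) := by ring
    linarith
  have hbA : L / 2 * (α ^ 2 * c1) * A ≤ α * (μ / 2) * A :=
    mul_le_mul_of_nonneg_right hb1 hAn
  have hbB : L / 2 * (α ^ 2 * c2) * B ≤ α * (1 / (4 * η)) * B :=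
    mul_le_mul_of_nonneg_right hb2 hBn
  have hquad' : L / 2 * ∑ i, (lam_bar i - lam_u i) ^ 2
      ≤ L / 2 * (α ^ 2 * (c1 * A + c2 * B)) :=
    mul_le_mul_of_nonneg_left hquad (by positivity)
  have hcv' : (1 - α) * (d lam_u + S1) ≤ (1 - α) * d lam_bar_prev :=
    mul_le_mul_of_nonneg_left hcv (by linarith)
  have e1 : (1 - α) * (d lam_u + S1) = (1 - α) * d lam_u + (1 - α) * S1 := by ring
  have e2 : (1 - α) * d lam_u = d lam_u - α * d lam_u := by ring
  have hexp : L / 2 * (α ^ 2 * (c1 * A + c2 * B))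
      = L / 2 * (α ^ 2 * c1) * A + L / 2 * (α ^ 2 * c2) * B := by ring
  have goalEq : α * (d lam_u + S2 + μ / 2 * A + 1 / (4 * η) * B)
      = α * d lam_u + α * S2 + α * (μ / 2) * A + α * (1 / (4 * η)) * B := by ring
  have eS2 : α * S2 = α * S2 := rfl
  linarith [hsm, hquad', hexp, hbA, hbB, hcv', e1, e2, goalEq]
end
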